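/- arXiv:1304.7478 — 3 statements merged into one kernel-verified Lean document; each statement's English description precedes it below -/
import Mathlib

section
/- Let q₀ be a nonzero complex number and q₁, q₂ complex numbers. There exists (k₁, k₂) ∈ ℝ² with q₀ + q₁e^{-ik₁} + q₂e^{-ik₂} = 0 if and only if | |q₁/q₀| - |q₂/q₀| | ≤ 1 ≤ |q₁/q₀| + |q₂/q₀|. -/
/-!
As `k` varies, `q * exp (-I * k)` runs over the circle of radius `‖q‖`, so the equation is solvable
iff `-q₀` is a sum `u + v` with `‖u‖ = ‖q₁‖` and `‖v‖ = ‖q₂‖`, i.e. iff there is a triangle with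
sides `‖q₀‖, ‖q₁‖, ‖q₂‖`. That is exactly the pair of triangle inequalities, divided by `‖q₀‖`.
-/

open Complex

theorem exists_mul_exp_neg_I_mul_eq_iff (q z : ℂ) :
    (∃ k : ℝ, q * exp (-I * k) = z) ↔ ‖z‖ = ‖q‖ := by
  constructor
  · rintro ⟨k, rfl⟩
    simp [norm_exp]
  · intro h
    refine ⟨arg q - arg z, ?_⟩
    calc q * exp (-I * ↑(arg q - arg z))
        = ‖q‖ * exp (arg q * I) * exp (-I * ↑(arg q - arg z)) := by
          rw [norm_mul_exp_arg_mul_I]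
      _ = ‖z‖ * exp (arg z * I) := by
          rw [h, mul_assoc, ← exp_add]
          congr 2
          push_cast
          ring
      _ = z := norm_mul_exp_arg_mul_I z

theorem exists_norm_eq_add_eq_ofReal {r₀ r₁ r₂ : ℝ} (h₀ : 0 < r₀) (hsub : |r₁ - r₂| ≤ r₀)
    (hadd : r₀ ≤ r₁ + r₂) : ∃ u v : ℂ, ‖u‖ = r₁ ∧ ‖v‖ = r₂ ∧ u + v = r₀ := by
  obtain ⟨hsub₁, hsub₂⟩ := abs_le.mp hsub
  -- `x` is the abscissa of the apex of the triangle with sides `r₀, r₁, r₂` (law of cosines).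
  set x : ℝ := (r₀ ^ 2 + r₁ ^ 2 - r₂ ^ 2) / (2 * r₀) with hx
  have hx_mul : x * (2 * r₀) = r₀ ^ 2 + r₁ ^ 2 - r₂ ^ 2 := by
    rw [hx]
    field_simp
  have hx_sq : x ^ 2 ≤ r₁ ^ 2 := by
    rw [hx, div_pow, div_le_iff₀ (by positivity)]
    have hA : 0 ≤ r₀ + r₁ - r₂ := by linarith
    have hB : 0 ≤ r₀ + r₁ + r₂ := by linarith
    have hC : 0 ≤ r₁ + r₂ - r₀ := by linarith
    have hD : 0 ≤ r₂ + r₀ - r₁ := by linarith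
    nlinarith [mul_nonneg (mul_nonneg hB hA) (mul_nonneg hD hC)]
  set y : ℝ := √(r₁ ^ 2 - x ^ 2)
  have hy_sq : y ^ 2 = r₁ ^ 2 - x ^ 2 := Real.sq_sqrt (by linarith)
  refine ⟨⟨x, y⟩, ⟨r₀ - x, -y⟩, ?_, ?_, ?_⟩
  · rw [norm_def, normSq_mk, show x * x + y * y = r₁ ^ 2 by nlinarith]
    exact Real.sqrt_sq (by linarith)
  · rw [norm_def, normSq_mk, show (r₀ - x) * (r₀ - x) + -y * -y = r₂ ^ 2 by nlinarith]
    exact Real.sqrt_sq (by linarith)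
  · apply Complex.ext <;> simp

theorem exists_norm_eq_add_eq_iff (w : ℂ) (r₁ r₂ : ℝ) :
    (∃ u v : ℂ, ‖u‖ = r₁ ∧ ‖v‖ = r₂ ∧ u + v = w) ↔ |r₁ - r₂| ≤ ‖w‖ ∧ ‖w‖ ≤ r₁ + r₂ := by
  constructor
  · rintro ⟨u, v, rfl, rfl, rfl⟩
    refine ⟨?_, norm_add_le u v⟩
    simpa using abs_norm_sub_norm_le u (-v)
  · rintro ⟨hsub, hadd⟩
    rcases eq_or_ne w 0 with rfl | hw
    · have hr : r₁ = r₂ := by simpa [sub_eq_zero] using hsub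
      have hr₁ : 0 ≤ r₁ := by simp at hadd; linarith
      refine ⟨r₁, -r₁, by simp [hr₁], by simp [← hr, hr₁], by simp⟩
    · obtain ⟨u, v, hu, hv, huv⟩ := exists_norm_eq_add_eq_ofReal (norm_pos_iff.mpr hw) hsub hadd
      have hw' : (‖w‖ : ℂ) ≠ 0 := ofReal_ne_zero.mpr (norm_ne_zero_iff.mpr hw)
      have hrot : ‖w / ‖w‖‖ = 1 := by simp [hw]
      refine ⟨u * (w / ‖w‖), v * (w / ‖w‖), ?_, ?_, ?_⟩
      · rw [norm_mul, hrot, mul_one, hu]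
      · rw [norm_mul, hrot, mul_one, hv]
      · rw [← add_mul, huv, mul_div_cancel₀ w hw']

/-- gapless condition for the graphene nearest-neighbor model: there is
`(k₁,k₂)` with `q₀ + q₁e^{-ik₁} + q₂e^{-ik₂} = 0` iff
`| |q₁/q₀| - |q₂/q₀| | ≤ 1 ≤ |q₁/q₀| + |q₂/q₀|`. -/
theorem graphene_gapless_condition (q₀ q₁ q₂ : ℂ) (hq₀ : q₀ ≠ 0) :
    (∃ k₁ k₂ : ℝ,
        q₀ + q₁ * Complex.exp (-Complex.I * k₁) + q₂ * Complex.exp (-Complex.I * k₂) = 0)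
      ↔ |‖q₁ / q₀‖ - ‖q₂ / q₀‖| ≤ 1 ∧
        1 ≤ ‖q₁ / q₀‖ + ‖q₂ / q₀‖ := by
  have h₀ : 0 < ‖q₀‖ := norm_pos_iff.mpr hq₀
  calc (∃ k₁ k₂ : ℝ, q₀ + q₁ * exp (-I * k₁) + q₂ * exp (-I * k₂) = 0)
      ↔ ∃ u v : ℂ, ‖u‖ = ‖q₁‖ ∧ ‖v‖ = ‖q₂‖ ∧ u + v = -q₀ := by
        simp only [← exists_mul_exp_neg_I_mul_eq_iff]
        constructor
        · rintro ⟨k₁, k₂, hk⟩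
          exact ⟨_, _, ⟨k₁, rfl⟩, ⟨k₂, rfl⟩, by linear_combination hk⟩
        · rintro ⟨u, v, ⟨k₁, rfl⟩, ⟨k₂, rfl⟩, huv⟩
          exact ⟨k₁, k₂, by linear_combination huv⟩
    _ ↔ |‖q₁‖ - ‖q₂‖| ≤ ‖q₀‖ ∧ ‖q₀‖ ≤ ‖q₁‖ + ‖q₂‖ := by
        rw [exists_norm_eq_add_eq_iff, norm_neg]
    _ ↔ |‖q₁ / q₀‖ - ‖q₂ / q₀‖| ≤ 1 ∧ 1 ≤ ‖q₁ / q₀‖ + ‖q₂ / q₀‖ := by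
        rw [norm_div, norm_div, div_sub_div_same, abs_div, abs_of_pos h₀, div_le_one h₀,
          ← add_div, le_div_iff₀ h₀, one_mul]
end

section
/- For real parameters q₁, q₂ ∈ [0,2] and q₃ ∈ [-1,1], define E(k₁,k₂) = (q₃² + |1 + q₁e^{-ik₁} + q₂e^{-ik₂}|²)^{1/2}. Then min over (k₁,k₂) ∈ ℝ² of E(k₁,k₂) is strictly positive if and only if q₃ ≠ 0, or q₂ < q₁ - 1, or q₂ > q₁ + 1, or q₂ < 1 - q₁. -/
/-!
The gap closes (`E` vanishes somewhere) exactly when `q₃ = 0` and `1 + q₁ z + q₂ w` vanishes for some unit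
complex numbers `z, w`, i.e. when `1, q₁, q₂` are the side lengths of a (possibly degenerate)
triangle: `|1 - q₁| ≤ q₂ ≤ 1 + q₁`. Outside this range the reverse triangle inequality bounds
`E` below by a positive constant; inside it, the intermediate value theorem applied to
`s ↦ ‖1 + q₁ e^{-is}‖` (which runs from `1 + q₁` down to `|1 - q₁|`) produces a zero.
-/

open Complex

lemma norm_sub_norm_sub_norm_le_norm_add_add {E : Type*} [SeminormedAddCommGroup E]
    (x y z : E) : ‖x‖ - ‖y‖ - ‖z‖ ≤ ‖x + y + z‖ := by
  have := norm_sub_le (x + y + z) (y + z)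
  rw [show x + y + z - (y + z) = x by abel] at this
  linarith [norm_add_le y z]

lemma max_abs_le_sqrt_sq_add_sq (x y : ℝ) : max |x| |y| ≤ Real.sqrt (x ^ 2 + y ^ 2) :=
  max_le (Real.abs_le_sqrt (by nlinarith)) (Real.abs_le_sqrt (by nlinarith))

lemma norm_ofReal_mul_exp_neg_I_mul {a : ℝ} (ha : 0 ≤ a) (t : ℝ) :
    ‖(a : ℂ) * exp (-I * t)‖ = a := by
  rw [norm_mul, norm_exp]
  simp [abs_of_nonneg ha]

lemma max_sub_le_norm_one_add_mul_exp_add_mul_exp {a b : ℝ} (ha : 0 ≤ a) (hb : 0 ≤ b)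
    (s t : ℝ) :
    max (1 - a - b) (max (a - 1 - b) (b - 1 - a)) ≤
      ‖1 + (a : ℂ) * exp (-I * s) + (b : ℂ) * exp (-I * t)‖ := by
  set u : ℂ := (a : ℂ) * exp (-I * s)
  set v : ℂ := (b : ℂ) * exp (-I * t)
  have hu : ‖u‖ = a := norm_ofReal_mul_exp_neg_I_mul ha s
  have hv : ‖v‖ = b := norm_ofReal_mul_exp_neg_I_mul hb t
  have h₁ := norm_sub_norm_sub_norm_le_norm_add_add 1 u v
  have h₂ := norm_sub_norm_sub_norm_le_norm_add_add u 1 v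
  have h₃ := norm_sub_norm_sub_norm_le_norm_add_add v 1 u
  rw [add_comm u 1] at h₂
  rw [add_comm v 1, add_assoc, add_comm v u, ← add_assoc] at h₃
  simp only [norm_one, hu, hv] at h₁ h₂ h₃
  exact max_le h₁ (max_le h₂ h₃)

lemma exists_norm_one_add_mul_exp_eq {a b : ℝ} (ha : 0 ≤ a) (hb : |1 - a| ≤ b)
    (hb' : b ≤ 1 + a) : ∃ s : ℝ, ‖1 + (a : ℂ) * exp (-I * s)‖ = b := by
  have hcont : Continuous fun s : ℝ => ‖1 + (a : ℂ) * exp (-I * s)‖ := by fun_prop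
  have h₀ : ‖1 + (a : ℂ) * exp (-I * (0 : ℝ))‖ = 1 + a := by
    rw [ofReal_zero, mul_zero, exp_zero, mul_one,
      show (1 : ℂ) + a = ((1 + a : ℝ) : ℂ) by push_cast; rfl, norm_real,
      Real.norm_of_nonneg (by linarith)]
  have hπ : ‖1 + (a : ℂ) * exp (-I * Real.pi)‖ = |1 - a| := by
    rw [neg_mul, exp_neg, mul_comm I, exp_pi_mul_I, inv_neg, inv_one,
      show (1 : ℂ) + a * -1 = ((1 - a : ℝ) : ℂ) by push_cast; ring, norm_real, Real.norm_eq_abs]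
  obtain ⟨s, -, hs⟩ := intermediate_value_Icc' Real.pi_pos.le hcont.continuousOn
    (show b ∈ Set.Icc _ _ by rw [h₀, hπ]; exact ⟨hb, hb'⟩)
  exact ⟨s, hs⟩

lemma exists_one_add_mul_exp_add_mul_exp_eq_zero {a b : ℝ} (ha : 0 ≤ a) (hb : |1 - a| ≤ b)
    (hb' : b ≤ 1 + a) :
    ∃ s t : ℝ, 1 + (a : ℂ) * exp (-I * s) + (b : ℂ) * exp (-I * t) = 0 := by
  obtain ⟨s, hs⟩ := exists_norm_one_add_mul_exp_eq ha hb hb'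
  set u := 1 + (a : ℂ) * exp (-I * s)
  -- `b e^{-it} = -u` for `-t = arg u + π`, since `u = ‖u‖ e^{i arg u}`.
  refine ⟨s, -(u.arg + Real.pi), ?_⟩
  have hexp : exp (-I * ((-(u.arg + Real.pi) : ℝ) : ℂ)) = -exp (u.arg * I) := by
    rw [show -I * ((-(u.arg + Real.pi) : ℝ) : ℂ) = u.arg * I + Real.pi * I by push_cast; ring,
      exp_add, exp_pi_mul_I, mul_neg_one]
  rw [hexp, ← hs, mul_neg, norm_mul_exp_arg_mul_I, add_neg_cancel]

theorem uniaxial_strain_gapped_iff_general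
    (q₁ q₂ q₃ : ℝ) (h₁ : q₁ ∈ Set.Icc (0:ℝ) 2) (h₂ : q₂ ∈ Set.Icc (0:ℝ) 2)
    (E : ℝ × ℝ → ℝ)
    (hE : ∀ k : ℝ × ℝ, E k = Real.sqrt (q₃^2 +
      (‖1 + (q₁:ℂ) * Complex.exp (-Complex.I * k.1)
        + (q₂:ℂ) * Complex.exp (-Complex.I * k.2)‖)^2)) :
    0 < sInf (Set.range E) ↔ (q₃ ≠ 0 ∨ q₂ < q₁ - 1 ∨ q₂ > q₁ + 1 ∨ q₂ < 1 - q₁) := by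
  have hbdd : BddBelow (Set.range E) :=
    ⟨0, Set.forall_mem_range.2 fun k => (hE k).symm ▸ Real.sqrt_nonneg _⟩
  constructor
  · intro hpos
    by_contra! hgapless
    obtain ⟨hq₃, hlow, hhigh, hlow'⟩ := hgapless
    obtain ⟨s, t, hzero⟩ := exists_one_add_mul_exp_add_mul_exp_eq_zero h₁.1
      (abs_sub_le_iff.2 ⟨by linarith, by linarith⟩) (by linarith)
    have hEst : E (s, t) = 0 := by rw [hE, hzero, hq₃]; simp
    linarith [csInf_le hbdd (Set.mem_range_self (s, t))]
  · intro hgapped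
    set c := max |q₃| (max (1 - q₁ - q₂) (max (q₁ - 1 - q₂) (q₂ - 1 - q₁)))
    have hc : 0 < c := by
      rcases hgapped with h | h | h | h
      · exact lt_max_of_lt_left (abs_pos.2 h)
      all_goals simp only [c, lt_max_iff]; grind
    refine hc.trans_le (le_csInf (Set.range_nonempty E) (Set.forall_mem_range.2 fun k => ?_))
    have hf := max_sub_le_norm_one_add_mul_exp_add_mul_exp h₁.1 h₂.1 k.1 k.2
    rw [hE k]
    exact (max_le_max le_rfl (hf.trans (le_abs_self _))).trans (max_abs_le_sqrt_sq_add_sq _ _)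

/-- the uniaxial strain model with `q₁, q₂ ∈ [0,2]`, `q₃ ∈ [-1,1]` is gapped at
Fermi energy 0, i.e. the minimum over `(k₁,k₂)` of
`E(k₁,k₂) = (q₃² + |1 + q₁e^{-ik₁} + q₂e^{-ik₂}|²)^{1/2}` is strictly positive, iff
`q₃ ≠ 0` or `q₂ < q₁ - 1` or `q₂ > q₁ + 1` or `q₂ < 1 - q₁`. -/
theorem uniaxial_strain_gapped_iff
    (q₁ q₂ q₃ : ℝ) (h₁ : q₁ ∈ Set.Icc (0:ℝ) 2) (h₂ : q₂ ∈ Set.Icc (0:ℝ) 2)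
    (h₃ : q₃ ∈ Set.Icc (-1:ℝ) 1)
    (E : ℝ × ℝ → ℝ)
    (hE : ∀ k : ℝ × ℝ, E k = Real.sqrt (q₃^2 +
      (‖1 + (q₁:ℂ) * Complex.exp (-Complex.I * k.1)
        + (q₂:ℂ) * Complex.exp (-Complex.I * k.2)‖)^2)) :
    0 < sInf (Set.range E) ↔ (q₃ ≠ 0 ∨ q₂ < q₁ - 1 ∨ q₂ > q₁ + 1 ∨ q₂ < 1 - q₁) :=
  uniaxial_strain_gapped_iff_general q₁ q₂ q₃ h₁ h₂ E hE
end

section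
/- Let P and Q be orthogonal projections on a Hilbert space (or self-adjoint idempotents in a unital C*-algebra) with ‖P - Q‖ < 1. Then the operator U := (QP + (1-Q)(1-P))·(1 - (Q-P)²)^{-1/2} is a well-defined unitary satisfying Q = U P U*. -/
/-! `V = QP + (1-Q)(1-P)` satisfies `V P = Q V` and `V V* = V* V = 1 - (Q-P)²`, and `(Q-P)²`
commutes with `P` and `Q`. For `‖P - Q‖ < 1` the square root `S` of `1 - (Q-P)²` is invertible,
self-adjoint and commutes with `P`, `Q` and `V`, so the polar part `V S⁻¹` is unitary and still
intertwines `P` with `Q`. -/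

open scoped Ring

theorem Commute.ringInverse_right {M₀ : Type*} [MonoidWithZero M₀] {a b : M₀}
    (h : Commute a b) : Commute a b⁻¹ʳ := by
  by_cases hb : IsUnit b
  · obtain ⟨u, rfl⟩ := hb
    rw [Ring.inverse_unit]
    exact h.units_inv_right
  · rw [Ring.inverse_non_unit _ hb]
    exact Commute.zero_right a

theorem mul_ringInverse_mem_unitary {R : Type*} [Semiring R] [StarRing R] {V S : R}
    (hS : IsUnit S) (hSsa : IsSelfAdjoint S) (hVS : Commute V S)
    (hVV : V * star V = S * S) (hVV' : star V * V = S * S) :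
    V * S⁻¹ʳ ∈ unitary R := by
  set T := S⁻¹ʳ
  have hT : star T = T := by rw [← Ring.inverse_star, hSsa.star_eq]
  have hST : S * T = 1 := Ring.mul_inverse_cancel S hS
  have hTS : T * S = 1 := Ring.inverse_mul_cancel S hS
  have hVT : Commute V T := hVS.ringInverse_right
  constructor
  · calc star (V * T) * (V * T) = T * (star V * V) * T := by
          rw [star_mul, hT]; simp only [mul_assoc]
      _ = (T * S) * (S * T) := by rw [hVV']; simp only [mul_assoc]
      _ = 1 := by rw [hTS, hST, one_mul]
  · calc V * T * star (V * T) = V * (T * T) * star V := by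
          rw [star_mul, hT]; simp only [mul_assoc]
      _ = T * T * (V * star V) := by rw [(hVT.mul_right hVT).eq]; simp only [mul_assoc]
      _ = T * ((T * S) * S) := by rw [hVV]; simp only [mul_assoc]
      _ = 1 := by rw [hTS, one_mul, hTS]

section Idempotent

variable {R : Type*} [Ring R] {P Q : R}

def katoRotation (P Q : R) : R := Q * P + (1 - Q) * (1 - P)

theorem IsIdempotentElem.commute_sub_sq_right (hP : IsIdempotentElem P) (hQ : IsIdempotentElem Q) :
    Commute ((Q - P) ^ 2) P := by
  rw [commute_iff_eq]
  simp only [sq, sub_mul, mul_sub, mul_assoc, hP.eq, hQ.eq, hP.mul_self_mul]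
  noncomm_ring

theorem IsIdempotentElem.commute_sub_sq_left (hP : IsIdempotentElem P) (hQ : IsIdempotentElem Q) :
    Commute ((Q - P) ^ 2) Q := by
  rw [← neg_sq, neg_sub]
  exact hQ.commute_sub_sq_right hP

theorem katoRotation_mul_swap (hP : IsIdempotentElem P) (hQ : IsIdempotentElem Q) :
    katoRotation P Q * katoRotation Q P = 1 - (Q - P) ^ 2 := by
  simp only [katoRotation, sq, sub_mul, mul_sub, add_mul, mul_add, mul_assoc, one_mul, mul_one,
    hP.eq, hQ.eq, hP.mul_self_mul]
  noncomm_ring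

theorem katoRotation_swap_mul (hP : IsIdempotentElem P) (hQ : IsIdempotentElem Q) :
    katoRotation Q P * katoRotation P Q = 1 - (Q - P) ^ 2 := by
  rw [katoRotation_mul_swap hQ hP, ← neg_sq, neg_sub]

theorem katoRotation_mul_left (hP : IsIdempotentElem P) (hQ : IsIdempotentElem Q) :
    katoRotation P Q * P = Q * katoRotation P Q := by
  simp only [katoRotation, sub_mul, mul_sub, add_mul, mul_add, mul_assoc, one_mul, mul_one,
    hP.eq, hQ.eq, hQ.mul_self_mul]
  noncomm_ring

theorem star_katoRotation [StarRing R] (hP : IsSelfAdjoint P) (hQ : IsSelfAdjoint Q) :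
    star (katoRotation P Q) = katoRotation Q P := by
  simp only [katoRotation, star_add, star_mul, star_sub, star_one, hP.star_eq, hQ.star_eq]

theorem katoRotation_commute {S : R} (hP : Commute P S) (hQ : Commute Q S) :
    Commute (katoRotation P Q) S :=
  (hQ.mul_left hP).add_left (((Commute.one_left S).sub_left hQ).mul_left
    ((Commute.one_left S).sub_left hP))

end Idempotent

section CStarAlgebra

variable {A : Type*} [CStarAlgebra A] [PartialOrder A] [StarOrderedRing A]

theorem Commute.cfcSqrt_right {a b : A} (h : Commute b a) : Commute b (CFC.sqrt a) := by
  rw [CFC.sqrt_eq_cfc]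
  exact (h.symm.cfc_nnreal _).symm

theorem IsSelfAdjoint.isStrictlyPositive_one_sub_sq {a : A} (ha : IsSelfAdjoint a)
    (h : ‖a‖ < 1) : IsStrictlyPositive (1 - a ^ 2) := by
  have hsq : ‖a ^ 2‖ < 1 := by
    rw [sq, ha.norm_mul_self]
    exact pow_lt_one₀ (norm_nonneg a) h two_ne_zero
  refine ⟨sub_nonneg.2 ((CStarAlgebra.norm_le_one_iff_of_nonneg _ ha.sq_nonneg).1 hsq.le), ?_⟩
  exact isUnit_one_sub_of_norm_lt_one hsq

end CStarAlgebra

/-- if `P, Q` are projections in a unital C*-algebra with `‖P - Q‖ < 1`, then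
`U := (QP + (1-Q)(1-P))·(1 - (Q-P)²)^{-1/2}` is a well-defined unitary with `Q = U P U*`. -/
theorem kato_unitary_intertwiner
    {A : Type*} [CStarAlgebra A] [PartialOrder A] [StarOrderedRing A]
    (P Q : A) (hP : IsIdempotentElem P) (hPsa : IsSelfAdjoint P)
    (hQ : IsIdempotentElem Q) (hQsa : IsSelfAdjoint Q)
    (hnorm : ‖P - Q‖ < 1)
    (U : A)
    (hU : U = (Q * P + (1 - Q) * (1 - P)) * Ring.inverse (CFC.sqrt (1 - (Q - P)^2))) :
    IsUnit (CFC.sqrt (1 - (Q - P)^2)) ∧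
    U * star U = 1 ∧ star U * U = 1 ∧ Q = U * P * star U := by
  change U = katoRotation P Q * _ at hU
  set S := CFC.sqrt (1 - (Q - P) ^ 2)
  have hpos : IsStrictlyPositive (1 - (Q - P) ^ 2) :=
    (hQsa.sub hPsa).isStrictlyPositive_one_sub_sq (by rwa [norm_sub_rev])
  have hS : IsUnit S := hpos.isUnit_cfcSqrt
  have hSS : S * S = 1 - (Q - P) ^ 2 := CFC.sqrt_mul_sqrt_self _ hpos.nonneg
  have hPS : Commute P S :=
    ((Commute.one_right P).sub_right (hP.commute_sub_sq_right hQ).symm).cfcSqrt_right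
  have hQS : Commute Q S :=
    ((Commute.one_right Q).sub_right (hP.commute_sub_sq_left hQ).symm).cfcSqrt_right
  have hU_mem : U ∈ unitary A := by
    rw [hU]
    refine mul_ringInverse_mem_unitary hS (CFC.sqrt_nonneg _).isSelfAdjoint
      (katoRotation_commute hPS hQS) ?_ ?_
    · rw [star_katoRotation hPsa hQsa, katoRotation_mul_swap hP hQ, hSS]
    · rw [star_katoRotation hPsa hQsa, katoRotation_swap_mul hP hQ, hSS]
  have hUP : U * P = Q * U := by
    rw [hU, mul_assoc, ← hPS.ringInverse_right.eq, ← mul_assoc, katoRotation_mul_left hP hQ,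
      mul_assoc]
  refine ⟨hS, Unitary.mul_star_self_of_mem hU_mem, Unitary.star_mul_self_of_mem hU_mem, ?_⟩
  rw [hUP, mul_assoc, Unitary.mul_star_self_of_mem hU_mem, mul_one]
end
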